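/- Let $d \ge 3$ be odd, $k < \ell$, and let $v \in \bigwedge V_k \subseteq \bigwedge V_\ell$ be a weight vector (for $\mathrm{GL}(k)^{\times d}$) of weight $\pmb{\lambda}$ with $\omega_{d,k} \wedge v \ne 0$. Then $\omega_{d,\ell} \wedge v \ne 0$ in $\bigwedge V_\ell$. -/

import Mathlib

open ExteriorAlgebra

noncomputable section

/-- The tensor space `(ℂ^k)^{⊗ d}` realized as functions on the cube `[k]^d`. -/
abbrev Tens (d k : ℕ) : Type := (Fin d → Fin k) → ℂ

/-- The standard basis vector `e_𝐢` of the tensor space. -/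
def eb {d k : ℕ} (i : Fin d → Fin k) : Tens d k := Pi.single i 1

/-- The action of a `d`-tuple of `k × k` matrices on the tensor space. -/
def matAct {d k : ℕ} (g : Fin d → Matrix (Fin k) (Fin k) ℂ) : Tens d k →ₗ[ℂ] Tens d k where
  toFun f := fun x => ∑ y : Fin d → Fin k, (∏ j, g j (x j) (y j)) * f y
  map_add' f₁ f₂ := by
    funext x
    simp [mul_add, Finset.sum_add_distrib]
  map_smul' c f := by
    funext x
    simp [Finset.mul_sum, mul_left_comm]

/-- The induced action on the exterior algebra `⋀ (ℂ^k)^{⊗ d}`. -/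
def extAct {d k : ℕ} (g : Fin d → Matrix (Fin k) (Fin k) ℂ) :
    ExteriorAlgebra ℂ (Tens d k) →ₐ[ℂ] ExteriorAlgebra ℂ (Tens d k) :=
  ExteriorAlgebra.map (matAct g)

/-- `v` is a weight vector of weight `lam` (a `d`-tuple of integer vectors, recorded as
natural numbers) for the action of `GL(k)^{× d}`. -/
def IsWeightVector {d k : ℕ} (lam : Fin d → Fin k → ℕ)
    (v : ExteriorAlgebra ℂ (Tens d k)) : Prop :=
  ∀ a : Fin d → Fin k → ℂ,
    extAct (fun j => Matrix.diagonal (a j)) v = (∏ j, ∏ i, a j i ^ lam j i) • v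

/-- A matrix is upper unitriangular (unipotent). -/
def IsUnipotent {k : ℕ} (g : Matrix (Fin k) (Fin k) ℂ) : Prop :=
  (∀ i, g i i = 1) ∧ ∀ i j : Fin k, j < i → g i j = 0

/-- `v` is a highest weight vector of weight `lam`: a nonzero weight vector invariant under
`U(k)^{× d}`. -/
def IsHWV {d k : ℕ} (lam : Fin d → Fin k → ℕ) (v : ExteriorAlgebra ℂ (Tens d k)) : Prop :=
  v ≠ 0 ∧ IsWeightVector lam v ∧
    ∀ g : Fin d → Matrix (Fin k) (Fin k) ℂ, (∀ j, IsUnipotent (g j)) → extAct g v = v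

/-- The highest weight space of weight `lam` in `⋀^n (ℂ^k)^{⊗ d}`: the weight-`lam`,
unipotent-invariant vectors of degree `n` (a submodule; highest weight vectors are its
nonzero elements). -/
def HWVspace (d k : ℕ) (lam : Fin d → Fin k → ℕ) (n : ℕ) :
    Submodule ℂ (ExteriorAlgebra ℂ (Tens d k)) where
  carrier := {v | v ∈ ⋀[ℂ]^n (Tens d k) ∧ IsWeightVector lam v ∧
    ∀ g : Fin d → Matrix (Fin k) (Fin k) ℂ, (∀ j, IsUnipotent (g j)) → extAct g v = v}
  add_mem' := by
    rintro u v ⟨hu1, hu2, hu3⟩ ⟨hv1, hv2, hv3⟩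
    refine ⟨Submodule.add_mem _ hu1 hv1, fun a => ?_, fun g hg => ?_⟩
    · simp [map_add, hu2 a, hv2 a, smul_add]
    · simp [map_add, hu3 g hg, hv3 g hg]
  zero_mem' := ⟨Submodule.zero_mem _, fun a => by simp [IsWeightVector], fun g hg => by simp⟩
  smul_mem' := by
    rintro c v ⟨hv1, hv2, hv3⟩
    refine ⟨Submodule.smul_mem _ _ hv1, fun a => ?_, fun g hg => ?_⟩
    · rw [map_smul, hv2 a, smul_comm]
    · rw [map_smul, hv3 g hg]

/-- The generalized Kronecker coefficient `g(𝛌)` of a `d`-tuple of partitions of `m` with at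
most `k` columns, given here in terms of the tuple `mu` of *conjugate* partitions
(`mu j = (λ^{(j)})'`, a weakly decreasing `k`-tuple): it is the dimension of the corresponding
highest weight space in `⋀^m (ℂ^k)^{⊗ d}`. -/
def kron (d k : ℕ) (mu : Fin d → Fin k → ℕ) (m : ℕ) : ℕ :=
  Module.finrank ℂ (HWVspace d k mu m)

/-- The Cayley form `ω_{d,k} ∈ ⋀^k (ℂ^k)^{⊗ d}`. -/
def cayley (d k : ℕ) : ExteriorAlgebra ℂ (Tens d k) :=
  ∑ π : Fin d → Equiv.Perm (Fin k),
    ((∏ j, Equiv.Perm.sign (π j) : ℤˣ) : ℤ) •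
      ExteriorAlgebra.ιMulti ℂ k (fun i => eb (fun j => π j i))


/-- The inclusion `(ℂ^k)^{⊗d} ⊆ (ℂ^ℓ)^{⊗d}` induced by the standard inclusion `ℂ^k ⊆ ℂ^ℓ`. -/
def inclMap {d k ℓ : ℕ} (h : k ≤ ℓ) : Tens d k →ₗ[ℂ] Tens d ℓ where
  toFun f := fun x =>
    if h' : ∀ j, ((x j : ℕ) < k) then f (fun j => ⟨(x j : ℕ), h' j⟩) else 0
  map_add' f g := by
    funext x
    by_cases h' : ∀ j, ((x j : ℕ) < k) <;> simp [h']
  map_smul' c f := by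
    funext x
    by_cases h' : ∀ j, ((x j : ℕ) < k) <;> simp [h']

/-!
It suffices to pass from `k` to `k + 1`. Let `e` be the basis vector at the corner
`(k+1, …, k+1)` and `P` the coordinate projection onto the points of `[k+1]^d` that lie in
`[k]^d` or are the corner. Then `⋀P` fixes `⋀V_k` and kills every summand of `ω_{d,k+1}` except
those with one wedge factor `e` and all others in `V_k`. Such a summand comes from a tuple of
permutations of `[k]`, extended to `[k+1]` and followed by a common transposition; as `d` is
odd, the summands are invariant under such a common right factor, so
`⋀P ω_{d,k+1} = ±(k+1) e ∧ ω_{d,k}`. Thus `ω_{d,k+1} ∧ v = 0` forces `e ∧ ω_{d,k} ∧ v = 0`,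
and contracting with the coordinate of `e`, which vanishes on `V_k`, gives `ω_{d,k} ∧ v = 0`.
-/

namespace ExteriorAlgebra

variable {R M N : Type*} [CommRing R] [AddCommGroup M] [Module R M] [AddCommGroup N]
  [Module R N]

lemma ιMulti_snoc {n : ℕ} (v : Fin n → M) (u : M) :
    ιMulti R (n + 1) (Fin.snoc v u) = ((-1 : ℤˣ) ^ n) • (ι R u * ιMulti R n v) := by
  have hrot : (Fin.snoc v u : Fin (n + 1) → M) = Fin.cons u v ∘ finRotate (n + 1) :=
    Fin.snoc_eq_cons_rotate v u
  rw [hrot, AlternatingMap.map_perm, ιMulti_succ_apply, Fin.cons_zero, sign_finRotate,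
    Nat.add_sub_cancel]
  rfl

lemma contractLeft_map_eq_zero {φ : Module.Dual R M} {F : N →ₗ[R] M} (hF : φ ∘ₗ F = 0)
    (x : ExteriorAlgebra R N) : CliffordAlgebra.contractLeft (Q := 0) φ (map F x) = 0 := by
  induction x using CliffordAlgebra.left_induction with
  | algebraMap r => rw [AlgHom.commutes, CliffordAlgebra.contractLeft_algebraMap]
  | add x y hx hy => rw [map_add, map_add, hx, hy, add_zero]
  | ι_mul x m hx =>
    rw [map_mul, map_apply_ι, CliffordAlgebra.contractLeft_ι_mul, hx, mul_zero, sub_zero,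
      ← LinearMap.comp_apply, hF, LinearMap.zero_apply, zero_smul]

lemma map_eq_zero_of_ι_mul_map_eq_zero {φ : Module.Dual R M} {F : N →ₗ[R] M}
    (hF : φ ∘ₗ F = 0) {u : M} (hu : φ u = 1) {x : ExteriorAlgebra R N}
    (h : ι R u * map F x = 0) : map F x = 0 := by
  have := congrArg (CliffordAlgebra.contractLeft (Q := 0) φ) h
  rwa [CliffordAlgebra.contractLeft_ι_mul, contractLeft_map_eq_zero hF, mul_zero, sub_zero,
    hu, one_smul, map_zero] at this

end ExteriorAlgebra

section Inclusion

variable {d k ℓ : ℕ}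

lemma inclMap_eb (h : k ≤ ℓ) (x : Fin d → Fin k) :
    inclMap h (eb x) = eb (fun j => Fin.castLE h (x j)) := by
  funext y
  simp only [inclMap, eb, LinearMap.coe_mk, AddHom.coe_mk, Pi.single_apply, funext_iff,
    Fin.ext_iff, Fin.val_castLE]
  split_ifs <;> grind

lemma inclMap_refl : inclMap (d := d) (le_refl k) = LinearMap.id := by
  ext f y
  simp [inclMap]

lemma inclMap_comp_inclMap {m : ℕ} (h₁ : k ≤ ℓ) (h₂ : ℓ ≤ m) :
    inclMap (d := d) h₂ ∘ₗ inclMap h₁ = inclMap (h₁.trans h₂) := by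
  ext f y
  simp only [inclMap, LinearMap.comp_apply, LinearMap.coe_mk, AddHom.coe_mk]
  split_ifs <;> grind

def restrictMap (h : k ≤ ℓ) : Tens d ℓ →ₗ[ℂ] Tens d k where
  toFun f y := f (fun j => Fin.castLE h (y j))
  map_add' _ _ := rfl
  map_smul' _ _ := rfl

lemma restrictMap_comp_inclMap (h : k ≤ ℓ) :
    restrictMap (d := d) h ∘ₗ inclMap h = LinearMap.id := by
  ext f y
  simp [restrictMap, inclMap]

lemma map_inclMap_injective (h : k ≤ ℓ) :
    Function.Injective (map (R := ℂ) (inclMap (d := d) h)) :=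
  Function.LeftInverse.injective (g := map (restrictMap h)) fun x => by
    rw [← AlgHom.comp_apply, map_comp_map, restrictMap_comp_inclMap, map_id, AlgHom.id_apply]

lemma proj_last_comp_inclMap [NeZero d] :
    (LinearMap.proj (fun _ => Fin.last k) : Module.Dual ℂ (Tens d (k + 1))) ∘ₗ
      inclMap k.le_succ = 0 := by
  ext f
  simp [inclMap]

end Inclusion

section Alignment

variable {d k : ℕ}

def IsAligned (y : Fin d → Fin (k + 1)) : Prop :=
  (∀ j, y j ≠ Fin.last k) ∨ ∀ j, y j = Fin.last k

instance : DecidablePred (IsAligned (d := d) (k := k)) := fun _ => by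
  unfold IsAligned; infer_instance

variable (d k) in
def alignProj : Tens d (k + 1) →ₗ[ℂ] Tens d (k + 1) where
  toFun f y := if IsAligned y then f y else 0
  map_add' f g := by ext y; by_cases h : IsAligned y <;> simp [h]
  map_smul' c f := by ext y; by_cases h : IsAligned y <;> simp [h]

lemma alignProj_eb (x : Fin d → Fin (k + 1)) :
    alignProj d k (eb x) = if IsAligned x then eb x else 0 := by
  ext y
  by_cases hy : y = x
  · subst hy; split_ifs <;> simp [alignProj, *]
  · have : eb x y = 0 := Pi.single_eq_of_ne hy 1
    split_ifs <;> simp [alignProj, this]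

lemma alignProj_comp_inclMap : alignProj d k ∘ₗ inclMap k.le_succ = inclMap k.le_succ := by
  ext f y
  suffices h : (∀ j, (y j : ℕ) < k) → IsAligned y by
    by_cases hy : ∀ j, (y j : ℕ) < k <;> simp [alignProj, inclMap, hy, h]
  exact fun hy => Or.inl fun j hj => (hy j).ne (by simp [hj])

end Alignment

namespace Equiv.Perm

variable {k : ℕ}

def extLast (σ : Perm (Fin k)) : Perm (Fin (k + 1)) :=
  finSuccEquivLast.symm.permCongr σ.optionCongr

@[simp]
lemma extLast_castSucc (σ : Perm (Fin k)) (i : Fin k) :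
    extLast σ i.castSucc = (σ i).castSucc := by
  simp [extLast, Equiv.permCongr_apply, finSuccEquivLast_symm_some]

@[simp]
lemma extLast_last (σ : Perm (Fin k)) : extLast σ (Fin.last k) = Fin.last k := by
  simp [extLast, Equiv.permCongr_apply]

@[simp]
lemma sign_extLast (σ : Perm (Fin k)) : sign (extLast σ) = sign σ := by
  rw [extLast, sign_permCongr, optionCongr_sign]

lemma extLast_injective : Function.Injective (extLast (k := k)) :=
  finSuccEquivLast.symm.permCongr.injective.comp optionCongr_injective

lemma exists_extLast_eq {ρ : Perm (Fin (k + 1))} (h : ρ (Fin.last k) = Fin.last k) :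
    ∃ σ, extLast σ = ρ := by
  refine ⟨removeNone (finSuccEquivLast.permCongr ρ), ?_⟩
  have hnone : finSuccEquivLast.permCongr ρ none = none := by
    simp [Equiv.permCongr_apply, h]
  rw [extLast, map_equiv_removeNone, hnone, swap_self, ← one_def, one_mul]
  exact finSuccEquivLast.permCongr.symm_apply_apply ρ

end Equiv.Perm

section CayleyTerm

open Equiv

variable {d k : ℕ}

def cayleyTerm (π : Fin d → Perm (Fin k)) : ExteriorAlgebra ℂ (Tens d k) :=
  (∏ j, Perm.sign (π j)) • ιMulti ℂ k (fun i => eb (fun j => π j i))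

lemma cayley_eq_sum_cayleyTerm : cayley d k = ∑ π, cayleyTerm π := rfl

lemma cayleyTerm_mul_right (hd : Odd d) (π : Fin d → Perm (Fin k)) (τ : Perm (Fin k)) :
    cayleyTerm (fun j => π j * τ) = cayleyTerm π := by
  have hfam : (fun i => eb (fun j => (π j * τ) i)) =
      (fun i => eb (d := d) (fun j => π j i)) ∘ τ := rfl
  rw [cayleyTerm, cayleyTerm, hfam, AlternatingMap.map_perm, smul_smul]
  simp only [map_mul, Finset.prod_mul_distrib, Finset.prod_const, Finset.card_univ,
    Fintype.card_fin, Int.units_pow_eq_pow_mod_two _ d, Nat.odd_iff.mp hd, pow_one, mul_assoc,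
    Int.units_mul_self, mul_one]

lemma cayleyTerm_extLast (σ : Fin d → Perm (Fin k)) :
    cayleyTerm (fun j => (σ j).extLast) = (-1 : ℤˣ) ^ k •
      (ι ℂ (eb fun _ => Fin.last k) * map (inclMap k.le_succ) (cayleyTerm σ)) := by
  have hfam : (fun i => eb (d := d) (fun j => (σ j).extLast i)) =
      Fin.snoc (fun i => inclMap k.le_succ (eb fun j => σ j i)) (eb fun _ => Fin.last k) := by
    funext i
    induction i using Fin.lastCases with
    | last => simp
    | cast i => simp only [Fin.snoc_castSucc, Perm.extLast_castSucc, inclMap_eb]; rfl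
  rw [cayleyTerm, cayleyTerm, hfam, ExteriorAlgebra.ιMulti_snoc, smul_comm,
    Units.smul_def (∏ j, _), Units.smul_def (∏ j, _), map_zsmul, mul_smul_comm,
    ExteriorAlgebra.map_apply_ιMulti]
  simp only [Perm.sign_extLast]
  rfl

end CayleyTerm

section CornerTuple

open Equiv

variable {d k : ℕ}

lemma map_alignProj_cayleyTerm (π : Fin d → Perm (Fin (k + 1))) :
    map (alignProj d k) (cayleyTerm π) =
      if ∀ i, IsAligned fun j => π j i then cayleyTerm π else 0 := by
  simp only [cayleyTerm, Units.smul_def, map_zsmul, map_apply_ιMulti]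
  split_ifs with h
  · congr 2
    funext i
    simp [alignProj_eb, h i]
  · obtain ⟨i, hi⟩ := not_forall.mp h
    rw [AlternatingMap.map_coord_zero _ i (by simp [alignProj_eb, hi]), smul_zero]

lemma forall_isAligned_iff [NeZero d] (π : Fin d → Perm (Fin (k + 1))) :
    (∀ i, IsAligned fun j => π j i) ↔ ∃ p, ∀ j, π j p = Fin.last k := by
  constructor
  · intro h
    refine ⟨(π 0).symm (Fin.last k), ?_⟩
    rcases h ((π 0).symm (Fin.last k)) with h0 | hall
    · exact absurd (by simp) (h0 0)
    · exact hall
  · rintro ⟨p, hp⟩ i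
    by_cases hi : i = p
    · exact Or.inr fun j => hi ▸ hp j
    · exact Or.inl fun j => hp j ▸ (π j).injective.ne hi

def cornerTuple (p : Fin (k + 1)) (σ : Fin d → Perm (Fin k)) : Fin d → Perm (Fin (k + 1)) :=
  fun j => (σ j).extLast * swap p (Fin.last k)

lemma cornerTuple_apply_self (p : Fin (k + 1)) (σ : Fin d → Perm (Fin k)) (j : Fin d) :
    cornerTuple p σ j p = Fin.last k := by
  simp [cornerTuple]

lemma cornerTuple_injective [NeZero d] :
    Function.Injective fun x : Fin (k + 1) × (Fin d → Perm (Fin k)) => cornerTuple x.1 x.2 := by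
  rintro ⟨p, σ⟩ ⟨q, τ⟩ h
  simp only at h
  obtain rfl : p = q := (cornerTuple p σ 0).injective <| by
    rw [cornerTuple_apply_self, h, cornerTuple_apply_self]
  exact Prod.ext rfl (funext fun j => Perm.extLast_injective (mul_right_cancel (congrFun h j)))

lemma exists_cornerTuple_eq [NeZero d] {π : Fin d → Perm (Fin (k + 1))}
    (h : ∀ i, IsAligned fun j => π j i) : ∃ p σ, cornerTuple p σ = π := by
  obtain ⟨p, hp⟩ := (forall_isAligned_iff π).mp h
  choose σ hσ using fun j =>
    Perm.exists_extLast_eq (ρ := π j * swap p (Fin.last k)) (by simp [hp])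
  refine ⟨p, σ, funext fun j => ?_⟩
  simp [cornerTuple, hσ, mul_assoc]

lemma cayleyTerm_cornerTuple (hd : Odd d) (p : Fin (k + 1)) (σ : Fin d → Perm (Fin k)) :
    cayleyTerm (cornerTuple p σ) = (-1 : ℤˣ) ^ k •
      (ι ℂ (eb fun _ => Fin.last k) * map (inclMap k.le_succ) (cayleyTerm σ)) :=
  (cayleyTerm_mul_right hd _ _).trans (cayleyTerm_extLast σ)

end CornerTuple

section Stability

variable {d k ℓ : ℕ}

lemma map_alignProj_cayley [NeZero d] (hd : Odd d) :
    map (alignProj d k) (cayley d (k + 1)) = (k + 1) • (-1 : ℤˣ) ^ k •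
      (ι ℂ (eb fun _ => Fin.last k) * map (inclMap k.le_succ) (cayley d k)) := by
  simp only [cayley_eq_sum_cayleyTerm, map_sum, map_alignProj_cayleyTerm, ← Finset.sum_filter]
  calc _ = ∑ x : Fin (k + 1) × (Fin d → Equiv.Perm (Fin k)),
          cayleyTerm (cornerTuple x.1 x.2) := by
        refine (Finset.sum_nbij _ (fun x _ => ?_) cornerTuple_injective.injOn (fun π hπ => ?_)
          fun _ _ => rfl).symm
        · simpa using (forall_isAligned_iff _).mpr ⟨x.1, cornerTuple_apply_self x.1 x.2⟩
        · obtain ⟨p, σ, rfl⟩ := exists_cornerTuple_eq (Finset.mem_filter.mp hπ).2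
          exact ⟨(p, σ), Finset.mem_coe.mpr (Finset.mem_univ _), rfl⟩
    _ = _ := by
        simp only [cayleyTerm_cornerTuple hd, Fintype.sum_prod_type, Finset.sum_const,
          Finset.card_univ, Fintype.card_fin, Finset.mul_sum, Finset.smul_sum]

lemma cayley_succ_mul_map_inclMap_ne_zero (hd : Odd d) {v : ExteriorAlgebra ℂ (Tens d k)}
    (hv : cayley d k * v ≠ 0) : cayley d (k + 1) * map (inclMap k.le_succ) v ≠ 0 := by
  have : NeZero d := ⟨hd.pos.ne'⟩
  intro h
  have h' := congrArg (map (alignProj d k)) h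
  rw [map_mul, map_alignProj_cayley hd, ← AlgHom.comp_apply, map_comp_map,
    alignProj_comp_inclMap, smul_mul_assoc, smul_mul_assoc, mul_assoc, ← map_mul, map_zero,
    ← Nat.cast_smul_eq_nsmul ℂ, smul_eq_zero, smul_eq_zero_iff_eq] at h'
  refine hv (map_inclMap_injective k.le_succ ?_)
  rw [map_zero]
  exact map_eq_zero_of_ι_mul_map_eq_zero proj_last_comp_inclMap (by simp [eb])
    (h'.resolve_left (Nat.cast_ne_zero.mpr k.succ_ne_zero))

theorem cayley_mul_map_inclMap_ne_zero (hd : Odd d) (h : k ≤ ℓ)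
    {v : ExteriorAlgebra ℂ (Tens d k)} (hv : cayley d k * v ≠ 0) :
    cayley d ℓ * map (inclMap h) v ≠ 0 := by
  induction ℓ, h using Nat.le_induction with
  | base => rwa [inclMap_refl, map_id, AlgHom.id_apply]
  | succ ℓ h ih =>
    have := cayley_succ_mul_map_inclMap_ne_zero hd ih
    rwa [← AlgHom.comp_apply, map_comp_map, inclMap_comp_inclMap] at this

end Stability

theorem cayley_wedge_stable_nonzero_general (d k ℓ : ℕ) (hd : Odd d) (hkl : k < ℓ)
    (v : ExteriorAlgebra ℂ (Tens d k)) (hv : cayley d k * v ≠ 0) :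
    cayley d ℓ * ExteriorAlgebra.map (inclMap (le_of_lt hkl)) v ≠ 0 :=
  cayley_mul_map_inclMap_ne_zero hd hkl.le hv

/-- Let `d ≥ 3` be odd and `k < ℓ`. If `v ∈ ⋀ V_k` is a weight vector for
`GL(k)^{×d}` with `ω_{d,k} ∧ v ≠ 0`, then `ω_{d,ℓ} ∧ v ≠ 0` in `⋀ V_ℓ` (via the natural
inclusion `⋀ V_k ⊆ ⋀ V_ℓ`). -/
theorem cayley_wedge_stable_nonzero (d k ℓ : ℕ) (hd : Odd d) (hd3 : 3 ≤ d) (hkl : k < ℓ)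
    (lam : Fin d → Fin k → ℕ) (v : ExteriorAlgebra ℂ (Tens d k))
    (hw : IsWeightVector lam v) (hv : cayley d k * v ≠ 0) :
    cayley d ℓ * ExteriorAlgebra.map (inclMap (le_of_lt hkl)) v ≠ 0 :=
  cayley_wedge_stable_nonzero_general d k ℓ hd hkl v hv
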